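/- If T2 is a refinement of T1 (i.e., every split of T1 is a split of T2), then for every character f, l_f(T2) ≤ l_f(T1); in particular, since every X-tree refines the star tree, the star tree has maximal parsimony score among all X-trees for every character. -/

import Mathlib

/-- A phylogenetic `X`-tree: a finite tree together with an injective
labelling of the taxa `X` by vertices. -/
structure PhyloTree (X : Type) where
  V : Type
  [fintypeV : Fintype V]
  G : SimpleGraph V
  connected : G.Connected
  acyclic : G.IsAcyclic
  leaf : X ↪ V

namespace PhyloTree

variable {X : Type}

/-- `g` extends the character `f` to all vertices of the tree. -/
def IsExtension {C : Type} (T : PhyloTree X) (f : X → C) (g : T.V → C) : Prop :=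
  ∀ x, g (T.leaf x) = f x

/-- The number of edges whose endpoints receive different states under `g`. -/
noncomputable def mutCount {C : Type} (T : PhyloTree X) (g : T.V → C) : ℕ :=
  Set.ncard { e | e ∈ T.G.edgeSet ∧ ∃ u v : T.V, e = s(u, v) ∧ g u ≠ g v }

/-- The parsimony score `l_f(T)` of a character `f` on the tree `T`. -/
noncomputable def score {C : Type} (T : PhyloTree X) (f : X → C) : ℕ :=
  sInf { n | ∃ g : T.V → C, T.IsExtension f g ∧ T.mutCount g = n }

/-- The Maximum Parsimony distance `d_MP(T₁,T₂) = max_f |l_f(T₁) - l_f(T₂)|`. -/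
noncomputable def dMP (T₁ T₂ : PhyloTree X) : ℕ :=
  sSup { n | ∃ f : X → ℕ, n = ((T₁.score f : ℤ) - (T₂.score f : ℤ)).natAbs }

end PhyloTree

/-- The set of `X`-splits induced by the edges of `T`: for each edge `{u,v}`,
the set of taxa on the `u`-side of the edge (both sides arise, by symmetry). -/
noncomputable def PhyloTree.splits {X : Type} (T : PhyloTree X) : Set (Set X) :=
  { A | ∃ u v : T.V, T.G.Adj u v ∧
      A = { x | (T.G.deleteEdges {s(u, v)}).Reachable (T.leaf x) u } }

/-- `T` is a star tree: one internal centre adjacent to all other vertices,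
and the taxa are exactly the non-centre vertices. -/
def PhyloTree.IsStar {X : Type} (T : PhyloTree X) : Prop :=
  ∃ c : T.V, (∀ v, v ≠ c → T.G.Adj c v) ∧ ∀ v, v ≠ c ↔ v ∈ Set.range T.leaf


/-! An optimal extension of `f` on `T₁` changes state on a set `D` of edges whose deletion
leaves no path between taxa of different states. In a tree, deleting `D` disconnects two taxa
iff a single edge of `D` does, and whether an edge disconnects two taxa depends only on its
split. Replacing each edge of `D` by an edge of `T₂` with the same split therefore gives at
most `|D|` edges of `T₂` with the same property, and colouring each component of `T₂` minus
these edges by the common state of its taxa is an extension with at most `|D|` changes.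
The splits of a star tree are the trivial splits `{x} | X ∖ {x}`, which every tree whose taxa
are leaves has. -/

open SimpleGraph

namespace SimpleGraph

variable {V : Type*} {G : SimpleGraph V}

lemma Reachable.apply_eq_of_forall_adj {β : Type*} {g : V → β}
    (hg : ∀ u v, G.Adj u v → g u = g v) {a b : V} (h : G.Reachable a b) : g a = g b := by
  obtain ⟨p⟩ := h
  induction p with
  | nil => rfl
  | cons hadj _ ih => exact (hg _ _ hadj).trans ih

lemma adj_of_neighborSet_eq_singleton {u w : V} (hu : G.neighborSet u = {w}) : G.Adj u w := by
  rw [← mem_neighborSet, hu]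
  rfl

lemma eq_of_reachable_deleteEdges_of_neighborSet_eq {u w a : V} (hu : G.neighborSet u = {w})
    (h : (G.deleteEdges {s(u, w)}).Reachable a u) : a = u := by
  obtain ⟨p⟩ := h.symm
  cases p with
  | nil => rfl
  | cons hadj _ =>
    rw [deleteEdges_adj] at hadj
    have hw : _ ∈ G.neighborSet u := hadj.1
    rw [hu, Set.mem_singleton_iff] at hw
    exact (hadj.2 (hw ▸ Set.mem_singleton _)).elim

lemma IsAcyclic.exists_not_reachable_deleteEdges_singleton (hA : G.IsAcyclic)
    {D : Set (Sym2 V)} {a b : V} (hab : G.Reachable a b)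
    (hD : ¬ (G.deleteEdges D).Reachable a b) :
    ∃ e ∈ D, ¬ (G.deleteEdges {e}).Reachable a b := by
  classical
  obtain ⟨p, hp⟩ := hab.exists_isPath
  obtain ⟨e, hep, heD⟩ : ∃ e ∈ p.edges, e ∈ D := by
    by_contra! h
    exact hD ⟨p.toDeleteEdges D h⟩
  refine ⟨e, heD, fun hre => ?_⟩
  induction e using Sym2.ind with | _ u v => ?_
  obtain ⟨q, hq⟩ := reachable_deleteEdges_iff_exists_walk.mp hre
  have hqp : q.bypass = p := congrArg Subtype.val
    ((hA.subsingleton_path a b).elim ⟨q.bypass, q.bypass_isPath⟩ ⟨p, hp⟩)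
  exact hq (q.edges_bypass_subset_edges (hqp ▸ hep))

lemma IsTree.reachable_deleteEdges_iff_not_reachable (hT : G.IsTree) {u v : V}
    (huv : G.Adj u v) (w : V) :
    (G.deleteEdges {s(u, v)}).Reachable w v ↔ ¬ (G.deleteEdges {s(u, v)}).Reachable w u := by
  refine ⟨fun hv hu => isBridge_iff.mp (isAcyclic_iff_forall_adj_isBridge.mp hT.isAcyclic huv)
    (hu.symm.trans hv), fun hu => ?_⟩
  obtain ⟨p, hp⟩ := (hT.connected w u).exists_isPath
  obtain ⟨q, hq⟩ := (hT.connected w v).exists_isPath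
  have hep : s(u, v) ∈ p.edges := by
    by_contra h
    exact hu (reachable_deleteEdges_iff_exists_walk.mpr ⟨p, h⟩)
  have huq : u ∉ q.support := hT.isAcyclic.ne_mem_support_of_support_of_adj_of_isPath hp hq huv
    (p.snd_mem_support_of_mem_edges hep)
  exact reachable_deleteEdges_iff_exists_walk.mpr
    ⟨q, fun h => huq (q.fst_mem_support_of_mem_edges h)⟩

lemma IsTree.not_reachable_deleteEdges_iff (hT : G.IsTree) {u v : V} (huv : G.Adj u v)
    (a b : V) :
    ¬ (G.deleteEdges {s(u, v)}).Reachable a b ↔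
      ((G.deleteEdges {s(u, v)}).Reachable a u ↔ ¬ (G.deleteEdges {s(u, v)}).Reachable b u) := by
  have ha := hT.reachable_deleteEdges_iff_not_reachable huv a
  have hb := hT.reachable_deleteEdges_iff_not_reachable huv b
  constructor
  · intro hab
    exact ⟨fun hau hbu => hab (hau.trans hbu.symm),
      fun hbu => by_contra fun hau => hab ((ha.mpr hau).trans (hb.mpr hbu).symm)⟩
  · intro h hab
    have : (G.deleteEdges {s(u, v)}).Reachable a u ↔ (G.deleteEdges {s(u, v)}).Reachable b u :=
      ⟨hab.symm.trans, hab.trans⟩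
    tauto

end SimpleGraph

namespace PhyloTree

variable {X C : Type}

attribute [local instance] PhyloTree.fintypeV

lemma isTree (T : PhyloTree X) : T.G.IsTree := ⟨T.connected, T.acyclic⟩

def side (T : PhyloTree X) (u v : T.V) : Set X :=
  {x | (T.G.deleteEdges {s(u, v)}).Reachable (T.leaf x) u}

lemma side_swap (T : PhyloTree X) {u v : T.V} (huv : T.G.Adj u v) :
    T.side v u = (T.side u v)ᶜ := by
  ext x
  simp only [side, Set.mem_ofPred_eq, Set.mem_compl_iff, Sym2.eq_swap (a := v)]
  exact T.isTree.reachable_deleteEdges_iff_not_reachable huv _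

lemma not_reachable_deleteEdges_leaf_iff (T : PhyloTree X) {u v : T.V} (huv : T.G.Adj u v)
    (x y : X) :
    ¬ (T.G.deleteEdges {s(u, v)}).Reachable (T.leaf x) (T.leaf y) ↔
      (x ∈ T.side u v ↔ y ∉ T.side u v) :=
  T.isTree.not_reachable_deleteEdges_iff huv _ _

lemma exists_edge_not_reachable_of_splits_subset {T₁ T₂ : PhyloTree X}
    (hs : T₁.splits ⊆ T₂.splits) {e : Sym2 T₁.V} (he : e ∈ T₁.G.edgeSet) :
    ∃ e' ∈ T₂.G.edgeSet, ∀ x y,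
      ¬ (T₁.G.deleteEdges {e}).Reachable (T₁.leaf x) (T₁.leaf y) →
      ¬ (T₂.G.deleteEdges {e'}).Reachable (T₂.leaf x) (T₂.leaf y) := by
  induction e using Sym2.inductionOn with | hf u v => ?_
  obtain ⟨u', v', huv', hside⟩ := hs ⟨u, v, he, rfl⟩
  change T₁.side u v = T₂.side u' v' at hside
  refine ⟨s(u', v'), huv', fun x y hxy => ?_⟩
  rw [T₁.not_reachable_deleteEdges_leaf_iff he, hside] at hxy
  rwa [T₂.not_reachable_deleteEdges_leaf_iff huv']

def Separates (T : PhyloTree X) (D : Set (Sym2 T.V)) (f : X → C) : Prop :=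
  ∀ x y, (T.G.deleteEdges D).Reachable (T.leaf x) (T.leaf y) → f x = f y

lemma Separates.of_splits_subset {T₁ T₂ : PhyloTree X} (hs : T₁.splits ⊆ T₂.splits)
    {D : Set (Sym2 T₁.V)} {f : X → C} (hD : T₁.Separates D f) (hDE : D ⊆ T₁.G.edgeSet) :
    ∃ D₂ : Set (Sym2 T₂.V), D₂.ncard ≤ D.ncard ∧ T₂.Separates D₂ f := by
  have : Nonempty (Sym2 T₂.V) := T₂.connected.nonempty.map fun v => s(v, v)
  choose! F _ hF using
    fun e (he : e ∈ D) => exists_edge_not_reachable_of_splits_subset hs (hDE he)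
  refine ⟨F '' D, Set.ncard_image_le (Set.toFinite D), fun x y hxy => ?_⟩
  by_contra hne
  obtain ⟨e, heD, he⟩ :=
    T₁.acyclic.exists_not_reachable_deleteEdges_singleton (T₁.connected _ _) (mt (hD x y) hne)
  exact hF e heD x y he
    (hxy.mono (deleteEdges_anti (Set.singleton_subset_iff.mpr (Set.mem_image_of_mem F heD))))

def changedEdges (T : PhyloTree X) (g : T.V → C) : Set (Sym2 T.V) :=
  {e | e ∈ T.G.edgeSet ∧ ∃ u v : T.V, e = s(u, v) ∧ g u ≠ g v}

lemma changedEdges_subset_edgeSet (T : PhyloTree X) (g : T.V → C) :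
    T.changedEdges g ⊆ T.G.edgeSet :=
  fun _ he => he.1

lemma IsExtension.separates_changedEdges {T : PhyloTree X} {f : X → C} {g : T.V → C}
    (hg : T.IsExtension f g) : T.Separates (T.changedEdges g) f := by
  intro x y hxy
  rw [← hg x, ← hg y]
  refine hxy.apply_eq_of_forall_adj fun u v huv => ?_
  rw [deleteEdges_adj] at huv
  by_contra hne
  exact huv.2 ⟨huv.1, u, v, rfl, hne⟩

lemma score_le_mutCount (T : PhyloTree X) {f : X → C} {g : T.V → C}
    (hg : T.IsExtension f g) : T.score f ≤ T.mutCount g :=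
  Nat.sInf_le ⟨g, hg, rfl⟩

lemma exists_isExtension_mutCount_eq_score [Nonempty C] (T : PhyloTree X) (f : X → C) :
    ∃ g : T.V → C, T.IsExtension f g ∧ T.mutCount g = T.score f :=
  Nat.sInf_mem (s := {n | ∃ g : T.V → C, T.IsExtension f g ∧ T.mutCount g = n})
    ⟨_, _, fun x => T.leaf.injective.extend_apply f (fun _ => Classical.arbitrary C) x, rfl⟩

lemma score_eq_zero_of_isEmpty [IsEmpty C] (T : PhyloTree X) (f : X → C) : T.score f = 0 := by
  obtain ⟨v⟩ := T.connected.nonempty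
  refine Nat.sInf_eq_zero.mpr (Or.inr (Set.eq_empty_of_forall_notMem ?_))
  rintro _ ⟨g, -, -⟩
  exact isEmptyElim (g v)

lemma Separates.score_le_ncard [Nonempty C] {T : PhyloTree X} {D : Set (Sym2 T.V)}
    {f : X → C} (hD : T.Separates D f) : T.score f ≤ D.ncard := by
  set H := T.G.deleteEdges D
  have hf : f.FactorsThrough fun x => H.connectedComponentMk (T.leaf x) :=
    fun x y hxy => hD x y (ConnectedComponent.eq.mp hxy)
  set F : H.ConnectedComponent → C := Function.extend
    (fun x => H.connectedComponentMk (T.leaf x)) f fun _ => Classical.arbitrary C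
  set g : T.V → C := F ∘ H.connectedComponentMk
  have hchanged : T.changedEdges g ⊆ D := by
    rintro _ ⟨he, u, v, rfl, hne⟩
    by_contra huv
    have hH : H.Adj u v := deleteEdges_adj.mpr ⟨he, huv⟩
    exact hne (congrArg F (ConnectedComponent.eq.mpr hH.reachable))
  have hg : T.IsExtension f g := fun x => hf.extend_apply (fun _ => Classical.arbitrary C) x
  calc T.score f ≤ T.mutCount g := T.score_le_mutCount hg
    _ ≤ D.ncard := Set.ncard_le_ncard hchanged (Set.toFinite D)

theorem score_le_score_of_splits_subset {T₁ T₂ : PhyloTree X} (hs : T₁.splits ⊆ T₂.splits)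
    (f : X → C) : T₂.score f ≤ T₁.score f := by
  cases isEmpty_or_nonempty C
  · exact (T₂.score_eq_zero_of_isEmpty f).trans_le (Nat.zero_le _)
  obtain ⟨g, hg, hgs⟩ := T₁.exists_isExtension_mutCount_eq_score f
  obtain ⟨D, hDcard, hD⟩ :=
    hg.separates_changedEdges.of_splits_subset hs (T₁.changedEdges_subset_edgeSet g)
  calc T₂.score f ≤ D.ncard := hD.score_le_ncard
    _ ≤ (T₁.changedEdges g).ncard := hDcard
    _ = T₁.score f := hgs

lemma side_leaf_eq_singleton (T : PhyloTree X) {x : X} {w : T.V}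
    (hx : T.G.neighborSet (T.leaf x) = {w}) : T.side (T.leaf x) w = {x} := by
  ext z
  refine ⟨fun hz => T.leaf.injective (eq_of_reachable_deleteEdges_of_neighborSet_eq hx hz),
    fun hz => ?_⟩
  rw [Set.mem_singleton_iff.mp hz]
  exact Reachable.refl _

lemma singleton_mem_splits (T : PhyloTree X) {x : X} {w : T.V}
    (hx : T.G.neighborSet (T.leaf x) = {w}) : {x} ∈ T.splits :=
  ⟨T.leaf x, w, adj_of_neighborSet_eq_singleton hx, (T.side_leaf_eq_singleton hx).symm⟩

lemma compl_singleton_mem_splits (T : PhyloTree X) {x : X} {w : T.V}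
    (hx : T.G.neighborSet (T.leaf x) = {w}) : {x}ᶜ ∈ T.splits := by
  have hxw := adj_of_neighborSet_eq_singleton hx
  refine ⟨w, T.leaf x, hxw.symm, ?_⟩
  rw [← T.side_leaf_eq_singleton hx, ← T.side_swap hxw]
  rfl

lemma IsStar.exists_leaf_of_adj {S : PhyloTree X} (hS : S.IsStar) {u v : S.V}
    (huv : S.G.Adj u v) :
    ∃ x, (u = S.leaf x ∧ S.G.neighborSet u = {v}) ∨
      (v = S.leaf x ∧ S.G.neighborSet v = {u}) := by
  obtain ⟨c, hc, hleaf⟩ := hS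
  have hcentre : ∀ a b, S.G.Adj a b → a = c ∨ b = c := by
    intro a b hab
    by_contra! ⟨ha, hb⟩
    refine isBridge_iff.mp (isAcyclic_iff_forall_adj_isBridge.mp S.acyclic hab) ?_
    have hac : (S.G.deleteEdges {s(a, b)}).Adj a c := by
      simp [(hc a ha).symm, Ne.symm hb, hab.ne]
    have hcb : (S.G.deleteEdges {s(a, b)}).Adj c b := by
      simp [hc b hb, Ne.symm ha, hab.ne.symm]
    exact hac.reachable.trans hcb.reachable
  have hnbr : ∀ a, a ≠ c → S.G.neighborSet a = {c} := fun a ha =>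
    Set.eq_singleton_iff_unique_mem.mpr
      ⟨(hc a ha).symm, fun b hab => (hcentre a b hab).resolve_left ha⟩
  rcases hcentre u v huv with rfl | rfl
  · obtain ⟨x, rfl⟩ := (hleaf v).mp huv.ne'
    exact ⟨x, .inr ⟨rfl, hnbr _ huv.ne'⟩⟩
  · obtain ⟨x, rfl⟩ := (hleaf u).mp huv.ne
    exact ⟨x, .inl ⟨rfl, hnbr _ huv.ne⟩⟩

lemma IsStar.splits_subset {S T : PhyloTree X} (hS : S.IsStar)
    (hT : ∀ x, (T.G.neighborSet (T.leaf x)).ncard = 1) : S.splits ⊆ T.splits := by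
  rintro _ ⟨u, v, huv, rfl⟩
  change S.side u v ∈ T.splits
  obtain ⟨x, ⟨rfl, hx⟩ | ⟨rfl, hx⟩⟩ := hS.exists_leaf_of_adj huv <;>
    obtain ⟨w, hw⟩ := Set.ncard_eq_one.mp (hT x)
  · rw [S.side_leaf_eq_singleton hx]
    exact T.singleton_mem_splits hw
  · rw [S.side_swap huv.symm, S.side_leaf_eq_singleton hx]
    exact T.compl_singleton_mem_splits hw

end PhyloTree

theorem score_antitone_of_refines_general {X : Type} :
    (∀ T₁ T₂ : PhyloTree X, T₁.splits ⊆ T₂.splits →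
      ∀ (C : Type) (f : X → C), T₂.score f ≤ T₁.score f) ∧
    (∀ S T : PhyloTree X, S.IsStar →
      (∀ x, (T.G.neighborSet (T.leaf x)).ncard = 1) →
      ∀ (C : Type) (f : X → C), T.score f ≤ S.score f) :=
  ⟨fun _ _ hs _ f => PhyloTree.score_le_score_of_splits_subset hs f,
    fun _ _ hS hT _ f => PhyloTree.score_le_score_of_splits_subset (hS.splits_subset hT) f⟩

/-- If `T₂` refines `T₁` (every split of `T₁` is a split of `T₂`) then
`l_f(T₂) ≤ l_f(T₁)` for every character `f`; in particular the star tree has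
maximal parsimony score among all `X`-trees for every character. -/
theorem score_antitone_of_refines {X : Type} [Fintype X] :
    (∀ T₁ T₂ : PhyloTree X, T₁.splits ⊆ T₂.splits →
      ∀ (C : Type) (f : X → C), T₂.score f ≤ T₁.score f) ∧
    (∀ S T : PhyloTree X, S.IsStar →
      (∀ x, (T.G.neighborSet (T.leaf x)).ncard = 1) →
      ∀ (C : Type) (f : X → C), T.score f ≤ S.score f) :=
  score_antitone_of_refines_general
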